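/- Let F be a CNF formula with an interval ordering, and consider the linear branch decomposition of F given by this linear order of cla(F) ∪ var(F). Then every cut of this decomposition has MIM-value at most 1 in I(F): for every prefix P of the ordering, the bipartite graph of incidence edges between P and its complement has no induced matching of size 2. -/

import Mathlib

/-- A clause is a finite set of literals; a literal is a variable paired with a polarity. -/
def occursIn {V : Type*} (x : V) (C : Finset (V × Bool)) : Prop := ∃ b, (x, b) ∈ C

/-- An assignment `τ` satisfies the clause `C` restricted to the variable set `X`. -/
def satisfiesOn {V : Type*} (τ : V → Bool) (C : Finset (V × Bool)) (X : Set V) : Prop :=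
  ∃ l ∈ C, l.1 ∈ X ∧ τ l.1 = l.2

/-- The set of (indices of) clauses of the subformula `F_{D,X}` satisfied by `τ`. -/
def satA {V ι : Type*} (F : ι → Finset (V × Bool)) (τ : V → Bool) (D : Set ι) (X : Set V) :
    Set ι := {i | i ∈ D ∧ satisfiesOn τ (F i) X}

/-- Precisely satisfiable clause-sets of the subformula `F_{D,X}`. -/
def PSA {V ι : Type*} (F : ι → Finset (V × Bool)) (D : Set ι) (X : Set V) : Set (Set ι) :=
  {s | ∃ τ : V → Bool, satA F τ D X = s}

/-- Clauses of `F` satisfied by the complete assignment `τ`. -/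
def satF {V ι : Type*} (F : ι → Finset (V × Bool)) (τ : V → Bool) : Set ι :=
  satA F τ Set.univ Set.univ

/-- The family of precisely satisfiable clause-sets of `F`. -/
def PS {V ι : Type*} (F : ι → Finset (V × Bool)) : Set (Set ι) := PSA F Set.univ Set.univ

/-- The incidence graph of a CNF formula. -/
def incidence {V ι : Type*} (F : ι → Finset (V × Bool)) : SimpleGraph (ι ⊕ V) where
  Adj a b := (∃ i x, a = Sum.inl i ∧ b = Sum.inr x ∧ occursIn x (F i)) ∨
             (∃ i x, b = Sum.inl i ∧ a = Sum.inr x ∧ occursIn x (F i))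
  symm := by
    constructor
    rintro a b (⟨i, x, h1, h2, h3⟩ | ⟨i, x, h1, h2, h3⟩)
    · exact Or.inr ⟨i, x, h1, h2, h3⟩
    · exact Or.inl ⟨i, x, h1, h2, h3⟩
  loopless := by constructor; rintro a (⟨i, x, h1, h2, _⟩ | ⟨i, x, h1, h2, _⟩) <;> simp_all

/-- The bigraph bipartization `G[A, Ā]`: keep only edges with exactly one endpoint in `A`. -/
def bipartize {α : Type*} (G : SimpleGraph α) (A : Set α) : SimpleGraph α where
  Adj a b := G.Adj a b ∧ ((a ∈ A ∧ b ∉ A) ∨ (b ∈ A ∧ a ∉ A))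
  symm := by constructor; intro a b h; exact ⟨h.1.symm, h.2.symm⟩
  loopless := by constructor; intro a h; exact G.loopless.irrefl a h.1

/-- `M` is an induced matching of the graph `G` (edges recorded as ordered pairs). -/
def IsIM {α : Type*} (G : SimpleGraph α) (M : Finset (α × α)) : Prop :=
  (∀ p ∈ M, G.Adj p.1 p.2) ∧
  ∀ p ∈ M, ∀ q ∈ M, p ≠ q →
    p.1 ≠ q.1 ∧ p.1 ≠ q.2 ∧ p.2 ≠ q.1 ∧ p.2 ≠ q.2 ∧
    ¬ G.Adj p.1 q.1 ∧ ¬ G.Adj p.1 q.2 ∧ ¬ G.Adj p.2 q.1 ∧ ¬ G.Adj p.2 q.2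

/-- Rooted binary trees with leaves labelled by `α`. -/
inductive BTree (α : Type u) : Type u
  | leaf : α → BTree α
  | node : BTree α → BTree α → BTree α

namespace BTree

def leaves {α : Type*} : BTree α → List α
  | leaf a => [a]
  | node l r => l.leaves ++ r.leaves

/-- The cuts of a branch decomposition: for every node of the tree, the set of labels of
leaves below it. -/
def cuts {α : Type*} : BTree α → List (Set α)
  | leaf a => [{a}]
  | node l r => {a | a ∈ l.leaves ∨ a ∈ r.leaves} :: (l.cuts ++ r.cuts)

def map {α β : Type*} (f : α → β) : BTree α → BTree β
  | leaf a => leaf (f a)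
  | node l r => node (l.map f) (r.map f)

end BTree

/-- `T` is a branch decomposition of the whole type `α`: its leaves are in bijection with `α`. -/
def IsBD {α : Type*} (T : BTree α) : Prop := T.leaves.Nodup ∧ ∀ a : α, a ∈ T.leaves

/-- The `ps`-value of a cut `S ⊆ cla(F) ⊕ var(F)` of the formula `F`. -/
noncomputable def psVal {V ι : Type*} (F : ι → Finset (V × Bool)) (S : Set (ι ⊕ V)) : ℕ :=
  max (PSA F {i | Sum.inl i ∉ S} {x | Sum.inr x ∈ S}).ncard
      (PSA F {i | Sum.inl i ∈ S} {x | Sum.inr x ∉ S}).ncard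

/-- The `ps`-width of the formula `F`. -/
noncomputable def psw {V ι : Type*} (F : ι → Finset (V × Bool)) : ℕ :=
  sInf {k | ∃ T : BTree (ι ⊕ V), IsBD T ∧ ∀ S ∈ T.cuts, psVal F S ≤ k}

/-- The MIM-width of a graph. -/
noncomputable def mimw {α : Type*} (G : SimpleGraph α) : ℕ :=
  sInf {k | ∃ T : BTree α, IsBD T ∧
    ∀ S ∈ T.cuts, ∀ M : Finset (α × α), IsIM (bipartize G S) M → M.card ≤ k}

/-!
Both edges cross the cut, so each of their endpoints in `P` precedes each endpoint outside `P`.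
Comparing two endpoints of the same side of the cut, one endpoint of one edge lies strictly
between the endpoints of the other edge, and the interval property then supplies an edge joining
the two matching edges.
-/

open Sum

theorem lt_of_mem_of_notMem_of_prefix {α β : Type*} [LinearOrder β] {f : α → β}
    {P : Set α} (hP : ∀ a b : α, f a ≤ f b → b ∈ P → a ∈ P) {a b : α} (ha : a ∈ P)
    (hb : b ∉ P) : f a < f b :=
  lt_of_not_ge fun h => hb (hP b a h ha)

structure IsIntervalOrdering {V ι : Type*} (F : ι → Finset (V × Bool)) (ord : ι ⊕ V → ℕ) :
    Prop where
  injective : Function.Injective ord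
  var_between : ∀ (x : V) (i : ι), occursIn x (F i) → ord (inr x) < ord (inl i) →
    ∀ y : V, ord (inr x) < ord (inr y) → ord (inr y) < ord (inl i) → occursIn y (F i)
  clause_between : ∀ (x : V) (i : ι), occursIn x (F i) → ord (inl i) < ord (inr x) →
    ∀ j : ι, ord (inl i) < ord (inl j) → ord (inl j) < ord (inr x) → occursIn x (F j)

def IsCutEdge {V ι : Type*} (P : Set (ι ⊕ V)) (i : ι) (x : V) : Prop :=
  (inl i ∈ P ∧ inr x ∉ P) ∨ (inr x ∈ P ∧ inl i ∉ P)

namespace IsIntervalOrdering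

variable {V ι : Type*} {F : ι → Finset (V × Bool)} {ord : ι ⊕ V → ℕ} {P : Set (ι ⊕ V)}
  {i i₁ i₂ j : ι} {x x₁ x₂ y : V}

theorem occursIn_of_var_lt_var (hI : IsIntervalOrdering F ord) (hx : occursIn x (F i))
    (hxy : ord (inr x) < ord (inr y)) (hyi : ord (inr y) < ord (inl i)) : occursIn y (F i) :=
  hI.var_between x i hx (hxy.trans hyi) y hxy hyi

theorem occursIn_of_clause_lt_clause (hI : IsIntervalOrdering F ord) (hx : occursIn x (F i))
    (hij : ord (inl i) < ord (inl j)) (hjx : ord (inl j) < ord (inr x)) : occursIn x (F j) :=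
  hI.clause_between x i hx (hij.trans hjx) j hij hjx

variable (hP : ∀ a b : ι ⊕ V, ord a ≤ ord b → b ∈ P → a ∈ P)
include hP

theorem occursIn_or_occursIn_of_clauses_mem (hI : IsIntervalOrdering F ord)
    (h₁ : occursIn x₁ (F i₁)) (h₂ : occursIn x₂ (F i₂)) (hi₁ : inl i₁ ∈ P) (hi₂ : inl i₂ ∈ P)
    (hx₁ : inr x₁ ∉ P) (hx₂ : inr x₂ ∉ P) : occursIn x₁ (F i₂) ∨ occursIn x₂ (F i₁) := by
  have lt {a b} : a ∈ P → b ∉ P → ord a < ord b := lt_of_mem_of_notMem_of_prefix hP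
  rcases lt_trichotomy (ord (inl i₁)) (ord (inl i₂)) with h | h | h
  · exact .inl (hI.occursIn_of_clause_lt_clause h₁ h (lt hi₂ hx₁))
  · cases hI.injective h
    exact .inl h₁
  · exact .inr (hI.occursIn_of_clause_lt_clause h₂ h (lt hi₁ hx₂))

theorem occursIn_or_occursIn_of_vars_mem (hI : IsIntervalOrdering F ord)
    (h₁ : occursIn x₁ (F i₁)) (h₂ : occursIn x₂ (F i₂)) (hx₁ : inr x₁ ∈ P) (hx₂ : inr x₂ ∈ P)
    (hi₁ : inl i₁ ∉ P) (hi₂ : inl i₂ ∉ P) : occursIn x₁ (F i₂) ∨ occursIn x₂ (F i₁) := by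
  have lt {a b} : a ∈ P → b ∉ P → ord a < ord b := lt_of_mem_of_notMem_of_prefix hP
  rcases lt_trichotomy (ord (inr x₁)) (ord (inr x₂)) with h | h | h
  · exact .inr (hI.occursIn_of_var_lt_var h₁ h (lt hx₂ hi₁))
  · cases hI.injective h
    exact .inl h₂
  · exact .inl (hI.occursIn_of_var_lt_var h₂ h (lt hx₁ hi₂))

theorem occursIn_of_clause_mem_of_var_mem (hI : IsIntervalOrdering F ord)
    (h₁ : occursIn x₁ (F i₁)) (h₂ : occursIn x₂ (F i₂)) (hi₁ : inl i₁ ∈ P) (hx₁ : inr x₁ ∉ P)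
    (hx₂ : inr x₂ ∈ P) (hi₂ : inl i₂ ∉ P) : occursIn x₁ (F i₂) := by
  have lt {a b} : a ∈ P → b ∉ P → ord a < ord b := lt_of_mem_of_notMem_of_prefix hP
  rcases lt_trichotomy (ord (inr x₁)) (ord (inl i₂)) with h | h | h
  · exact hI.occursIn_of_var_lt_var h₂ (lt hx₂ hx₁) h
  · cases hI.injective h
  · exact hI.occursIn_of_clause_lt_clause h₁ (lt hi₁ hi₂) h

theorem occursIn_or_occursIn_of_isCutEdge (hI : IsIntervalOrdering F ord)
    (h₁ : occursIn x₁ (F i₁)) (h₂ : occursIn x₂ (F i₂)) (e₁ : IsCutEdge P i₁ x₁)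
    (e₂ : IsCutEdge P i₂ x₂) : occursIn x₁ (F i₂) ∨ occursIn x₂ (F i₁) := by
  rcases e₁ with ⟨hi₁, hx₁⟩ | ⟨hx₁, hi₁⟩ <;> rcases e₂ with ⟨hi₂, hx₂⟩ | ⟨hx₂, hi₂⟩
  · exact hI.occursIn_or_occursIn_of_clauses_mem hP h₁ h₂ hi₁ hi₂ hx₁ hx₂
  · exact .inl (hI.occursIn_of_clause_mem_of_var_mem hP h₁ h₂ hi₁ hx₁ hx₂ hi₂)
  · exact .inr (hI.occursIn_of_clause_mem_of_var_mem hP h₂ h₁ hi₂ hx₂ hx₁ hi₁)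
  · exact hI.occursIn_or_occursIn_of_vars_mem hP h₁ h₂ hx₁ hx₂ hi₁ hi₂

end IsIntervalOrdering

/-- for a formula with an interval ordering, every prefix cut of the corresponding
linear branch decomposition has no induced matching of size 2 in the cut graph. -/
theorem stmt14 {V ι : Type*} (F : ι → Finset (V × Bool)) (ord : ι ⊕ V → ℕ)
    (hinj : Function.Injective ord)
    (h1 : ∀ (x : V) (i : ι), occursIn x (F i) → ord (Sum.inr x) < ord (Sum.inl i) →
      ∀ y : V, ord (Sum.inr x) < ord (Sum.inr y) → ord (Sum.inr y) < ord (Sum.inl i) →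
        occursIn y (F i))
    (h2 : ∀ (x : V) (i : ι), occursIn x (F i) → ord (Sum.inl i) < ord (Sum.inr x) →
      ∀ j : ι, ord (Sum.inl i) < ord (Sum.inl j) → ord (Sum.inl j) < ord (Sum.inr x) →
        occursIn x (F j))
    (P : Set (ι ⊕ V)) (hP : ∀ a b : ι ⊕ V, ord a ≤ ord b → b ∈ P → a ∈ P) :
    ¬ ∃ (i1 i2 : ι) (x1 x2 : V),
      occursIn x1 (F i1) ∧ occursIn x2 (F i2) ∧
      ¬ occursIn x1 (F i2) ∧ ¬ occursIn x2 (F i1) ∧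
      (((Sum.inl i1 : ι ⊕ V) ∈ P ∧ (Sum.inr x1 : ι ⊕ V) ∉ P) ∨
        ((Sum.inr x1 : ι ⊕ V) ∈ P ∧ (Sum.inl i1 : ι ⊕ V) ∉ P)) ∧
      (((Sum.inl i2 : ι ⊕ V) ∈ P ∧ (Sum.inr x2 : ι ⊕ V) ∉ P) ∨
        ((Sum.inr x2 : ι ⊕ V) ∈ P ∧ (Sum.inl i2 : ι ⊕ V) ∉ P)) := by
  rintro ⟨i1, i2, x1, x2, o1, o2, n1, n2, e1, e2⟩
  have hI : IsIntervalOrdering F ord := ⟨hinj, h1, h2⟩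
  exact (hI.occursIn_or_occursIn_of_isCutEdge hP o1 o2 e1 e2).elim n1 n2
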